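/- If x ≠ y, then for every μ ∈ ℰ(A) and μ-a.e. w ∈ A^ℤ, lim_{n→∞} n/|G(w_1…w_n)| = 1/(1 − μ(xy)); i.e., the inverse mean shortening Z_{xy}^μ equals 1/(1 − μ(xy)). -/

import Mathlib

open MeasureTheory Filter Topology

instance optionMeasurableSpace {A : Type*} [MeasurableSpace A] : MeasurableSpace (Option A) :=
  MeasurableSpace.comap (Option.elim' (Sum.inr ()) Sum.inl : Option A → A ⊕ Unit) inferInstance

/-- Left-to-right non-overlapping substitution of the pair `x y` by a new symbol `none`. -/
def pairSubst {A : Type*} [DecidableEq A] (x y : A) : List A → List (Option A)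
  | [] => []
  | [a] => [some a]
  | a :: b :: l =>
      if a = x ∧ b = y then none :: pairSubst x y l
      else some a :: pairSubst x y (b :: l)

/-- Substitution of every occurrence of `none` by the pair `x y`. -/
def pairExpand {A : Type*} (x y : A) : List (Option A) → List A
  | [] => []
  | none :: l => x :: y :: pairExpand x y l
  | some a :: l => a :: pairExpand x y l

/-- Number of (possibly overlapping) occurrences of `s` as a contiguous subword of `r`. -/
def occ {B : Type*} [DecidableEq B] (s r : List B) : ℕ :=
  (List.range r.length).countP (fun i => decide (s <+: r.drop i))

/-- The word `w₁ … wₙ` read out of a two-sided sequence. -/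
def wordOf {B : Type*} (w : ℤ → B) (n : ℕ) : List B :=
  (List.range n).map (fun i => w (i : ℤ))

/-- The cylinder set determined by a word. -/
def cyl {B : Type*} (s : List B) : Set (ℤ → B) :=
  {x | ∀ i : Fin s.length, x ((i : ℕ) : ℤ) = s.get i}

/-- The shift map on two-sided sequences. -/
def shift {B : Type*} : (ℤ → B) → (ℤ → B) := fun x i => x (i + 1)

/-- The `n`-block entropy of a measure on `B^ℤ` (base-2 logarithms). -/
noncomputable def blockH {B : Type*} [Fintype B] [MeasurableSpace B]
    (μ : Measure (ℤ → B)) (n : ℕ) : ℝ :=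
  -∑ z : Fin n → B,
    (μ {x : ℤ → B | ∀ i : Fin n, x ((i : ℕ) : ℤ) = z i}).toReal *
      Real.logb 2 ((μ {x : ℤ → B | ∀ i : Fin n, x ((i : ℕ) : ℤ) = z i}).toReal)

/-- `k`-Markov property (stated with cross-multiplied conditional probabilities). -/
def IsKMarkov {B : Type*} [MeasurableSpace B] (μ : Measure (ℤ → B)) (k : ℕ) : Prop :=
  ∀ w : List B, k ≤ w.length → μ (cyl w) ≠ 0 → ∀ a : B,
    μ (cyl (w ++ [a])) * μ (cyl (w.drop (w.length - k))) =
      μ (cyl (w.drop (w.length - k) ++ [a])) * μ (cyl w)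


/-!
Since `x ≠ y`, occurrences of `x y` cannot overlap, so `G` shortens `w₁ … wₙ` by exactly the
number of positions `1 ≤ i < n` with `wᵢ wᵢ₊₁ = x y`. That number is the Birkhoff sum of the
indicator of the cylinder `[x y]` along the shift, so by the pointwise ergodic theorem
`|G(w₁ … wₙ)| / n → 1 - μ(xy)` almost surely; the limit is positive because `[x y]` is disjoint
from its preimage under the shift, which forces `μ(xy) ≤ 1/2`.

The ergodic theorem is obtained for `[0, 1]`-valued functions by the stopping-time argument:
the `limsup` of the averages is shift invariant, hence a.e. equal to a constant `a`, and for
`b < a` almost every orbit can be cut greedily into blocks of bounded length with average at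
least `b`, which after integration gives `b ≤ ∫ g`.
-/

lemma limsup_le_limsup_of_tendsto_sub {u v : ℕ → ℝ} (hu : IsBoundedUnder (· ≤ ·) atTop u)
    (hu' : IsBoundedUnder (· ≥ ·) atTop u) (h : Tendsto (fun n => v n - u n) atTop (𝓝 0)) :
    limsup v atTop ≤ limsup u atTop :=
  calc limsup v atTop = limsup (u + (v - u)) atTop := by rw [add_sub_cancel]
    _ ≤ limsup u atTop + limsup (v - u) atTop :=
        limsup_add_le hu' hu h.isBoundedUnder_ge.isCoboundedUnder_le h.isBoundedUnder_le
    _ = limsup u atTop := by rw [show limsup (v - u) atTop = 0 from h.limsup_eq, add_zero]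

section BirkhoffSum

variable {α : Type*} {T : α → α} {g : α → ℝ}

lemma birkhoffSum_nonneg (hg : ∀ x, 0 ≤ g x) (n : ℕ) (x : α) : 0 ≤ birkhoffSum T g n x :=
  Finset.sum_nonneg fun _ _ => hg _

lemma birkhoffAverage_mem_Icc (hg : ∀ x, g x ∈ Set.Icc (0 : ℝ) 1) (n : ℕ) (x : α) :
    birkhoffAverage ℝ T g n x ∈ Set.Icc (0 : ℝ) 1 := by
  have hsum : birkhoffSum T g n x ≤ n := by
    simpa [birkhoffSum] using
      Finset.sum_le_card_nsmul (Finset.range n) _ 1 fun k _ => (hg (T^[k] x)).2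
  rw [birkhoffAverage, smul_eq_mul]
  exact ⟨mul_nonneg (by positivity) (birkhoffSum_nonneg (fun x => (hg x).1) n x),
    inv_mul_le_one_of_le₀ hsum (Nat.cast_nonneg n)⟩

lemma isBoundedUnder_le_birkhoffAverage (hg : ∀ x, g x ∈ Set.Icc (0 : ℝ) 1) (x : α) :
    IsBoundedUnder (· ≤ ·) atTop (birkhoffAverage ℝ T g · x) :=
  isBoundedUnder_of ⟨1, fun n => (birkhoffAverage_mem_Icc hg n x).2⟩

lemma isBoundedUnder_ge_birkhoffAverage (hg : ∀ x, g x ∈ Set.Icc (0 : ℝ) 1) (x : α) :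
    IsBoundedUnder (· ≥ ·) atTop (birkhoffAverage ℝ T g · x) :=
  isBoundedUnder_of ⟨0, fun n => (birkhoffAverage_mem_Icc hg n x).1⟩

lemma limsup_birkhoffAverage_apply (hg : ∀ x, g x ∈ Set.Icc (0 : ℝ) 1) (x : α) :
    limsup (birkhoffAverage ℝ T g · (T x)) atTop = limsup (birkhoffAverage ℝ T g · x) atTop := by
  have hg_bdd : Bornology.IsBounded (Set.range g) :=
    (Metric.isBounded_Icc (0 : ℝ) 1).subset (Set.range_subset_iff.2 hg)
  have h := tendsto_birkhoffAverage_apply_sub_birkhoffAverage' ℝ hg_bdd T x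
  refine le_antisymm (limsup_le_limsup_of_tendsto_sub (isBoundedUnder_le_birkhoffAverage hg x)
    (isBoundedUnder_ge_birkhoffAverage hg x) h) (limsup_le_limsup_of_tendsto_sub
    (isBoundedUnder_le_birkhoffAverage hg _) (isBoundedUnder_ge_birkhoffAverage hg _) ?_)
  simpa only [neg_sub, neg_zero] using h.neg

/-- Cutting an orbit segment greedily into blocks of length at most `N`, each of sum at least
`b` per step. -/
lemma sub_mul_le_birkhoffSum (hg : ∀ x, 0 ≤ g x) {b : ℝ} (hb : 0 ≤ b) {N : ℕ}
    (hcover : ∀ x, ∃ m, 0 < m ∧ m ≤ N ∧ m * b ≤ birkhoffSum T g m x) (L : ℕ) (x : α) :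
    (L - N : ℝ) * b ≤ birkhoffSum T g L x := by
  induction L using Nat.strong_induction_on generalizing x with
  | _ L ih =>
    by_cases hLN : L ≤ N
    · have hL : (L : ℝ) - N ≤ 0 := sub_nonpos.2 (by exact_mod_cast hLN)
      exact (mul_nonpos_of_nonpos_of_nonneg hL hb).trans (birkhoffSum_nonneg hg L x)
    obtain ⟨m, hm0, hmN, hm⟩ := hcover x
    obtain ⟨k, rfl⟩ : ∃ k, L = m + k := ⟨L - m, by omega⟩
    calc ((m + k : ℕ) - N : ℝ) * b = m * b + (k - N) * b := by push_cast; ring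
      _ ≤ birkhoffSum T g m x + birkhoffSum T g k (T^[m] x) :=
          add_le_add hm (ih k (by omega) _)
      _ = birkhoffSum T g (m + k) x := (birkhoffSum_add T g m k x).symm

end BirkhoffSum

section Ergodic

variable {α : Type*} [MeasurableSpace α] {μ : Measure α} {T : α → α} {g : α → ℝ}

lemma Measurable.birkhoffSum (hg : Measurable g) (hT : Measurable T) (n : ℕ) :
    Measurable (birkhoffSum T g n) :=
  Finset.measurable_sum _ fun k _ => hg.comp (hT.iterate k)

lemma Measurable.birkhoffAverage (hg : Measurable g) (hT : Measurable T) (n : ℕ) :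
    Measurable (birkhoffAverage ℝ T g n) :=
  (hg.birkhoffSum hT n).const_smul ((n : ℝ)⁻¹)

lemma integrable_of_forall_mem_Icc [IsFiniteMeasure μ] (hgm : Measurable g)
    (hg : ∀ x, g x ∈ Set.Icc (0 : ℝ) 1) : Integrable g μ :=
  .of_bound hgm.aestronglyMeasurable 1
    (ae_of_all _ fun x => by rw [Real.norm_of_nonneg (hg x).1]; exact (hg x).2)

lemma MeasureTheory.MeasurePreserving.integrable_birkhoffSum (hT : MeasurePreserving T μ μ)
    (hg : Integrable g μ) (n : ℕ) : Integrable (birkhoffSum T g n) μ :=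
  integrable_finsetSum _ fun k _ => (hT.iterate k).integrable_comp_of_integrable hg

lemma MeasureTheory.MeasurePreserving.integral_birkhoffSum (hT : MeasurePreserving T μ μ)
    (hg : Integrable g μ) (n : ℕ) : ∫ x, birkhoffSum T g n x ∂μ = n * ∫ x, g x ∂μ := by
  have hcomp : ∀ k, ∫ x, g (T^[k] x) ∂μ = ∫ x, g x ∂μ := fun k => by
    rw [← integral_map (hT.iterate k).measurable.aemeasurable
      (by rw [(hT.iterate k).map_eq]; exact hg.aestronglyMeasurable), (hT.iterate k).map_eq]
  simp only [birkhoffSum]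
  rw [integral_finsetSum (f := fun k x => g (T^[k] x)) _ fun k _ =>
    (hT.iterate k).integrable_comp_of_integrable hg]
  simp [hcomp]

lemma le_integral_of_frequently_lt_birkhoffAverage [IsProbabilityMeasure μ]
    (hT : MeasurePreserving T μ μ) (hgm : Measurable g) (hgi : Integrable g μ)
    (hg : ∀ x, 0 ≤ g x) {b : ℝ}
    (hb : ∀ᵐ x ∂μ, ∃ᶠ n in atTop, b < birkhoffAverage ℝ T g n x) :
    b ≤ ∫ x, g x ∂μ := by
  rcases le_or_gt b 0 with hb0 | hb0
  · exact hb0.trans (integral_nonneg hg)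
  set E : ℕ → Set α := fun N => {x | ∀ m ≤ N, birkhoffSum T g (m + 1) x < (m + 1 : ℕ) * b}
  have hEm : ∀ N, MeasurableSet (E N) := fun N => by
    simp only [E, Set.ofPred_forall]
    exact MeasurableSet.iInter fun m => MeasurableSet.iInter fun _ =>
      measurableSet_lt (hgm.birkhoffSum hT.measurable _) measurable_const
  have hE_anti : Antitone E := fun N M hNM x hx m hm => hx m (hm.trans hNM)
  have hE_null : μ (⋂ N, E N) = 0 := by
    refine measure_eq_zero_iff_ae_notMem.2 (hb.mono fun x hx hmem => ?_)
    obtain ⟨n, hbn, hn⟩ := (hx.and_eventually (eventually_gt_atTop 0)).exists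
    obtain ⟨m, rfl⟩ : ∃ m, n = m + 1 := ⟨n - 1, by omega⟩
    have hlt := Set.mem_iInter.1 hmem m m le_rfl
    rw [birkhoffAverage, smul_eq_mul, lt_inv_mul_iff₀ (by positivity)] at hbn
    linarith
  -- Adding `b` on `E N` lets a good block of length at most `N + 1` start at every point,
  -- at the cost `b * μ (E N)`, which vanishes as `N → ∞`.
  have hbound : ∀ N, b ≤ ∫ x, g x ∂μ + μ.real (E N) * b := by
    intro N
    set h : α → ℝ := g + (E N).indicator fun _ => b
    have hhi : Integrable h μ := hgi.add ((integrable_const b).indicator (hEm N))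
    have hh0 : ∀ x, 0 ≤ h x := fun x =>
      add_nonneg (hg x) (Set.indicator_nonneg (fun _ _ => hb0.le) x)
    have hcover : ∀ x, ∃ m, 0 < m ∧ m ≤ N + 1 ∧ m * b ≤ birkhoffSum T h m x := by
      intro x
      by_cases hx : x ∈ E N
      · refine ⟨1, one_pos, by omega, ?_⟩
        simp [h, birkhoffSum_one, Set.indicator_of_mem hx, hg x]
      · simp only [E, Set.mem_ofPred_eq, not_forall, not_lt] at hx
        obtain ⟨m, hm, hle⟩ := hx
        refine ⟨m + 1, m.succ_pos, by omega, hle.trans ?_⟩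
        exact Finset.sum_le_sum fun k _ =>
          le_add_of_nonneg_right (Set.indicator_nonneg (fun _ _ => hb0.le) _)
    have hint : ∀ L : ℕ, (L - (N + 1 : ℕ) : ℝ) * b ≤ L * ∫ x, h x ∂μ := fun L => by
      rw [← hT.integral_birkhoffSum hhi]
      simpa using integral_mono (integrable_const _) (hT.integrable_birkhoffSum hhi L)
        (sub_mul_le_birkhoffSum hh0 hb0.le hcover L)
    have hb_le : b ≤ ∫ x, h x ∂μ := by
      by_contra! hlt
      obtain ⟨L, hL⟩ := exists_nat_gt ((N + 1 : ℕ) * b / (b - ∫ x, h x ∂μ))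
      rw [div_lt_iff₀ (sub_pos.2 hlt)] at hL
      linarith [hint L]
    rwa [show ∫ x, h x ∂μ = ∫ x, g x + (E N).indicator (fun _ => b) x ∂μ from rfl,
      integral_add hgi ((integrable_const b).indicator (hEm N)),
      integral_indicator_const _ (hEm N), smul_eq_mul] at hb_le
  have hlim : Tendsto (fun N => ∫ x, g x ∂μ + μ.real (E N) * b) atTop
      (𝓝 (∫ x, g x ∂μ + 0 * b)) := by
    refine tendsto_const_nhds.add (Tendsto.mul_const _ ?_)
    have := tendsto_measure_iInter_atTop (fun N => (hEm N).nullMeasurableSet) hE_anti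
      ⟨0, measure_ne_top μ _⟩
    rw [hE_null] at this
    exact (ENNReal.tendsto_toReal ENNReal.zero_ne_top).comp this
  simpa using ge_of_tendsto' hlim hbound

lemma ae_limsup_birkhoffAverage_le_integral [IsProbabilityMeasure μ] (hT : Ergodic T μ)
    (hgm : Measurable g) (hg : ∀ x, g x ∈ Set.Icc (0 : ℝ) 1) :
    ∀ᵐ x ∂μ, limsup (birkhoffAverage ℝ T g · x) atTop ≤ ∫ x, g x ∂μ := by
  obtain ⟨a, ha⟩ := hT.toPreErgodic.ae_eq_const_of_ae_eq_comp
    (Measurable.limsup fun n => hgm.birkhoffAverage hT.measurable n)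
    (funext (limsup_birkhoffAverage_apply hg))
  suffices a ≤ ∫ x, g x ∂μ from ha.mono fun x hx => hx.trans_le this
  refine le_of_forall_lt_imp_le_of_dense fun b hb =>
    le_integral_of_frequently_lt_birkhoffAverage hT.toMeasurePreserving hgm
      (integrable_of_forall_mem_Icc hgm hg) (fun x => (hg x).1) (ha.mono fun x hx => ?_)
  refine frequently_lt_of_lt_limsup (isBoundedUnder_ge_birkhoffAverage hg x).isCoboundedUnder_le ?_
  exact (show limsup (birkhoffAverage ℝ T g · x) atTop = a from hx) ▸ hb

theorem ae_tendsto_birkhoffAverage [IsProbabilityMeasure μ] (hT : Ergodic T μ)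
    (hgm : Measurable g) (hg : ∀ x, g x ∈ Set.Icc (0 : ℝ) 1) :
    ∀ᵐ x ∂μ, Tendsto (birkhoffAverage ℝ T g · x) atTop (𝓝 (∫ x, g x ∂μ)) := by
  have hg' : ∀ x, (1 - g) x ∈ Set.Icc (0 : ℝ) 1 := fun x => by simpa using (hg x).symm
  have hint : ∫ x, (1 - g) x ∂μ = 1 - ∫ x, g x ∂μ := by
    simp only [Pi.sub_apply, Pi.one_apply]
    rw [integral_sub (integrable_const 1) (integrable_of_forall_mem_Icc hgm hg)]
    simp
  filter_upwards [ae_limsup_birkhoffAverage_le_integral hT hgm hg,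
    ae_limsup_birkhoffAverage_le_integral (g := 1 - g) hT (measurable_one.sub hgm) hg']
    with x hx hx'
  refine tendsto_order.2 ⟨fun c hc => ?_, fun c hc => ?_⟩
  · have hlt : limsup (birkhoffAverage ℝ T (1 - g) · x) atTop < 1 - c := by linarith
    filter_upwards [eventually_lt_of_limsup_lt hlt (isBoundedUnder_le_birkhoffAverage hg' x),
      eventually_gt_atTop 0] with n hn hn0
    rw [birkhoffAverage_sub, Pi.sub_apply, Pi.sub_apply,
      birkhoffAverage_of_comp_eq ℝ (f := T) (g := (1 : α → ℝ)) rfl (by exact_mod_cast hn0.ne'),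
      Pi.one_apply] at hn
    linarith
  · exact eventually_lt_of_limsup_lt (hx.trans_lt hc) (isBoundedUnder_le_birkhoffAverage hg x)

lemma MeasureTheory.MeasurePreserving.two_mul_measureReal_le_one [IsProbabilityMeasure μ]
    (hT : MeasurePreserving T μ μ) {s : Set α} (hs : MeasurableSet s)
    (hdisj : Disjoint s (T ⁻¹' s)) : 2 * μ.real s ≤ 1 :=
  calc 2 * μ.real s = μ.real s + μ.real (T ⁻¹' s) := by
        rw [hT.measureReal_preimage hs.nullMeasurableSet]; ring
    _ = μ.real (s ∪ T ⁻¹' s) := (measureReal_union hdisj (hs.preimage hT.measurable)).symm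
    _ ≤ 1 := measureReal_le_one

end Ergodic

section Words

variable {A : Type*}

lemma pair_prefix_cons_cons {x y a b : A} {l : List A} :
    [x, y] <+: a :: b :: l ↔ a = x ∧ b = y := by
  simp [List.cons_prefix_cons, eq_comm]

-- `wordOf` coerces `List.range n` to `List ℤ` (through the list monad) before mapping.
lemma wordOf_eq_map (w : ℤ → A) (n : ℕ) :
    wordOf w n = (List.range n).map (fun i : ℕ => w i) := by
  simp [wordOf, ← List.map_eq_flatMap]

lemma wordOf_succ (w : ℤ → A) (n : ℕ) : wordOf w (n + 1) = w 0 :: wordOf (shift w) n := by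
  simp [wordOf_eq_map, List.range_succ_eq_map, shift]

lemma mem_cyl_pair {x y : A} {w : ℤ → A} : w ∈ cyl [x, y] ↔ w 0 = x ∧ w 1 = y := by
  simp [cyl, Fin.forall_fin_two]

lemma disjoint_cyl_pair_preimage_shift {x y : A} (hxy : x ≠ y) :
    Disjoint (cyl [x, y]) (shift ⁻¹' cyl [x, y]) :=
  Set.disjoint_left.2 fun _ hw hw' =>
    hxy ((mem_cyl_pair.1 hw').1.symm.trans (mem_cyl_pair.1 hw).2)

lemma measurableSet_cyl [MeasurableSpace A] [MeasurableSingletonClass A] (s : List A) :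
    MeasurableSet (cyl s) := by
  simp only [cyl, Set.ofPred_forall]
  exact MeasurableSet.iInter fun i => measurable_pi_apply _ (measurableSet_singleton _)

variable [DecidableEq A]

lemma occ_nil (s : List A) : occ s [] = 0 := rfl

lemma occ_cons (s : List A) (a : A) (l : List A) :
    occ s (a :: l) = (if s <+: a :: l then 1 else 0) + occ s l := by
  simp only [occ, List.length_cons, List.range_succ_eq_map, List.countP_cons, List.countP_map]
  simp [Function.comp_def, add_comm]

/-- Occurrences of `x y` cannot overlap when `x ≠ y`, so each is replaced by `pairSubst`. -/
lemma length_pairSubst_add_occ {x y : A} (hxy : x ≠ y) (l : List A) :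
    (pairSubst x y l).length + occ [x, y] l = l.length := by
  induction l using pairSubst.induct x y with
  | case1 => rfl
  | case2 a => simp [pairSubst, occ_cons, occ_nil]
  | case3 a b l h ih =>
    obtain ⟨rfl, rfl⟩ := h
    have hy : ¬ [a, b] <+: b :: l := by simp [List.cons_prefix_cons, hxy]
    rw [pairSubst, if_pos ⟨rfl, rfl⟩, occ_cons, if_pos (pair_prefix_cons_cons.2 ⟨rfl, rfl⟩),
      occ_cons, if_neg hy]
    simp only [List.length_cons] at ih ⊢
    omega
  | case4 a b l h ih =>
    rw [pairSubst, if_neg h, occ_cons, if_neg (mt pair_prefix_cons_cons.1 h)]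
    simp only [List.length_cons] at ih ⊢
    omega

lemma occ_pair_wordOf_succ (x y : A) (w : ℤ → A) (n : ℕ) :
    (occ [x, y] (wordOf w (n + 1)) : ℝ) = birkhoffSum shift ((cyl [x, y]).indicator 1) n w := by
  induction n generalizing w with
  | zero => simp [wordOf, occ_cons, occ_nil, List.cons_prefix_cons]
  | succ n ih =>
    have hpre : [x, y] <+: wordOf w (n + 2) ↔ w ∈ cyl [x, y] := by
      rw [wordOf_succ, wordOf_succ, pair_prefix_cons_cons, mem_cyl_pair]
      rfl
    conv_lhs => rw [wordOf_succ, occ_cons, ← wordOf_succ]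
    rw [birkhoffSum_succ', ← ih]
    by_cases h : w ∈ cyl [x, y] <;> simp [hpre, h]

lemma length_pairSubst_wordOf_succ {x y : A} (hxy : x ≠ y) (w : ℤ → A) (n : ℕ) :
    ((pairSubst x y (wordOf w (n + 1))).length : ℝ) =
      n + 1 - birkhoffSum shift ((cyl [x, y]).indicator 1) n w := by
  have h := length_pairSubst_add_occ hxy (wordOf w (n + 1))
  rw [wordOf_eq_map, List.length_map, List.length_range, ← wordOf_eq_map] at h
  rw [← occ_pair_wordOf_succ]
  linarith [(by exact_mod_cast h : ((pairSubst x y (wordOf w (n + 1))).length : ℝ) +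
    occ [x, y] (wordOf w (n + 1)) = n + 1)]

end Words

theorem stmt_4_general {A : Type*} [DecidableEq A] [MeasurableSpace A]
    [MeasurableSingletonClass A]
    (x y : A) (hxy : x ≠ y)
    (μ : Measure (ℤ → A)) [IsProbabilityMeasure μ] (hμ : Ergodic shift μ) :
    ∀ᵐ w ∂μ, Tendsto
      (fun n : ℕ => (n : ℝ) / ((pairSubst x y (wordOf w n)).length : ℝ))
      atTop (𝓝 (1 / (1 - (μ (cyl [x, y])).toReal))) := by
  have hcyl := measurableSet_cyl (A := A) [x, y]
  have hhalf := hμ.toMeasurePreserving.two_mul_measureReal_le_one hcyl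
    (disjoint_cyl_pair_preimage_shift hxy)
  have hg : ∀ w, (cyl [x, y]).indicator (1 : (ℤ → A) → ℝ) w ∈ Set.Icc (0 : ℝ) 1 := fun w => by
    by_cases h : w ∈ cyl [x, y] <;> simp [h]
  filter_upwards [ae_tendsto_birkhoffAverage hμ (measurable_one.indicator hcyl) hg] with w hw
  rw [integral_indicator_one hcyl] at hw
  have hS : Tendsto (fun n : ℕ => birkhoffSum shift ((cyl [x, y]).indicator 1) n w / (n + 1 : ℝ))
      atTop (𝓝 (μ.real (cyl [x, y]))) := by
    convert hw.mul (tendsto_natCast_div_add_atTop (1 : ℝ)) using 1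
    · ext n
      rcases n.eq_zero_or_pos with rfl | hn
      · simp
      · rw [birkhoffAverage, smul_eq_mul]
        field_simp
    · rw [mul_one]
  refine (tendsto_add_atTop_iff_nat 1).1 ?_
  convert (tendsto_const_nhds (x := (1 : ℝ)).sub hS).inv₀ (by linarith) using 1
  · ext n
    rw [length_pairSubst_wordOf_succ hxy, Nat.cast_succ]
    field_simp
  · rw [one_div, measureReal_def]

/-- for `x ≠ y`, the inverse mean shortening `Z_{xy}^μ` equals `1/(1 − μ(xy))`:
`μ`-a.e. `n/|G(w₁…wₙ)| → 1/(1 − μ(xy))`. -/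
theorem stmt_4 {A : Type*} [Fintype A] [DecidableEq A] [MeasurableSpace A]
    [MeasurableSingletonClass A]
    (x y : A) (hxy : x ≠ y)
    (μ : Measure (ℤ → A)) [IsProbabilityMeasure μ] (hμ : Ergodic shift μ) :
    ∀ᵐ w ∂μ, Tendsto
      (fun n : ℕ => (n : ℝ) / ((pairSubst x y (wordOf w n)).length : ℝ))
      atTop (𝓝 (1 / (1 - (μ (cyl [x, y])).toReal))) :=
  stmt_4_general x y hxy μ hμ
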